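/- arXiv:2206.06334 — 7 statements merged into one kernel-verified Lean document; each statement's English description precedes it below -/
import Mathlib

section
/- Let A be a real symmetric positive definite n×n matrix, X := {x ∈ ℝⁿ : Ax·x ≤ ℏ} and X^ℏ = {p ∈ ℝⁿ : A⁻¹p·p ≤ ℏ} its ℏ-polar dual. Let M_{A^{1/2}} be the 2n×2n block-diagonal matrix [[A^{−1/2}, 0],[0, A^{1/2}]]. Then: (a) M_{A^{1/2}} is symplectic; (b) the image M_{A^{1/2}}(B^{2n}(√ℏ)) equals the ellipsoid Q_A := {(x,p) ∈ ℝ^{2n} : Ax·x + A⁻¹p·p ≤ ℏ}; (c) Q_A ⊆ X × X^ℏ; (d) the orthogonal projection of Q_A onto the first factor ℝⁿ (the x-coordinates) equals X, and its orthogonal projection onto the second factor ℝⁿ (the p-coordinates) equals X^ℏ. -/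
open Matrix Set

noncomputable section

/-- The ℏ-polar dual of a set `X ⊆ ℝⁿ`. -/
def polarDual {n : ℕ} (ℏ : ℝ) (X : Set (Fin n → ℝ)) : Set (Fin n → ℝ) :=
  {p | ∀ x ∈ X, p ⬝ᵥ x ≤ ℏ}

/-- The standard symplectic matrix `J = [[0, I],[-I, 0]]` on `ℝ²ⁿ = ℝⁿ ⊕ ℝⁿ`. -/
def J (n : ℕ) : Matrix (Fin n ⊕ Fin n) (Fin n ⊕ Fin n) ℝ :=
  Matrix.fromBlocks 0 1 (-1) 0

/-- `S ∈ Sp(n)` iff `Sᵀ J S = J`. -/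
def IsSymplectic {n : ℕ} (S : Matrix (Fin n ⊕ Fin n) (Fin n ⊕ Fin n) ℝ) : Prop :=
  Sᵀ * J n * S = J n

/-- The closed ball `B²ⁿ(√ℏ) = {z : z·z ≤ ℏ}` of radius `√ℏ` centered at `0`. -/
def ballh (n : ℕ) (ℏ : ℝ) : Set (Fin n ⊕ Fin n → ℝ) :=
  {z | z ⬝ᵥ z ≤ ℏ}

/-- The positive semidefinite square root of a positive semidefinite matrix
(removed from Mathlib; restored here with its former definition). -/
def Matrix.PosSemidef.sqrt {n : Type*} [Fintype n] [DecidableEq n]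
    {A : Matrix n n ℝ} (hA : A.PosSemidef) : Matrix n n ℝ :=
  hA.1.eigenvectorUnitary.1 * diagonal ((↑) ∘ (√·) ∘ hA.1.eigenvalues) *
    (star hA.1.eigenvectorUnitary : Matrix n n ℝ)

/-! With `R = A^{1/2}` (symmetric, invertible, `RᵀR = A`) the matrix `M` is `diag(R⁻¹, Rᵀ)`, and
every `diag(L⁻¹, Lᵀ)` with `L` invertible is symplectic. Its inverse `diag(L, (Lᵀ)⁻¹)` pulls the
ball `|z|² ≤ ℏ` back to `|Lx|² + |(Lᵀ)⁻¹p|² ≤ ℏ`, i.e. `Gx·x + G⁻¹p·p ≤ ℏ` with `G = LᵀL = A`.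
Both quadratic forms are nonnegative and vanish at `0`, so dropping one summand gives the
inclusion `Q_A ⊆ X × X^ℏ`, and taking the other variable to be `0` shows the projections are
onto `X` and `X^ℏ`. -/

namespace Matrix

section Sqrt

variable {m : Type*} [Fintype m] {A : Matrix m m ℝ}

theorem PosSemidef.mulVec_dotProduct_nonneg (hA : A.PosSemidef) (x : m → ℝ) :
    0 ≤ A *ᵥ x ⬝ᵥ x := by
  simpa [dotProduct_comm] using hA.dotProduct_mulVec_nonneg x

variable [DecidableEq m]

theorem PosSemidef.sqrt_mul_sqrt (hA : A.PosSemidef) : hA.sqrt * hA.sqrt = A := by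
  have hU : (star hA.1.eigenvectorUnitary : Matrix m m ℝ) * hA.1.eigenvectorUnitary.1 = 1 :=
    Unitary.coe_star_mul_self _
  conv_rhs => rw [hA.1.spectral_theorem, Unitary.conjStarAlgAut_apply]
  unfold Matrix.PosSemidef.sqrt
  rw [show ∀ a b c d e f : Matrix m m ℝ, a * b * c * (d * e * f) = a * (b * (c * d) * e) * f by
    intros; simp only [Matrix.mul_assoc], hU, Matrix.mul_one, diagonal_mul_diagonal]
  congr 3
  funext i
  simp [Real.mul_self_sqrt (hA.eigenvalues_nonneg i)]

theorem PosSemidef.transpose_sqrt (hA : A.PosSemidef) : hA.sqrtᵀ = hA.sqrt := by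
  unfold Matrix.PosSemidef.sqrt
  rw [← conjTranspose_eq_transpose_of_trivial]
  simp [Matrix.mul_assoc, star_eq_conjTranspose]

theorem PosSemidef.transpose_sqrt_mul_sqrt (hA : A.PosSemidef) : hA.sqrtᵀ * hA.sqrt = A := by
  rw [hA.transpose_sqrt, hA.sqrt_mul_sqrt]

theorem PosDef.isUnit_sqrt (hA : A.PosDef) : IsUnit hA.posSemidef.sqrt := by
  have hdet : IsUnit (hA.posSemidef.sqrt * hA.posSemidef.sqrt).det := by
    rw [hA.posSemidef.sqrt_mul_sqrt]
    exact hA.det_pos.ne'.isUnit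
  rw [det_mul, isUnit_mul_self_iff] at hdet
  exact (isUnit_iff_isUnit_det _).2 hdet

end Sqrt

variable {m n K : Type*} [Fintype m] [Fintype n]

theorem transpose_mul_self_mulVec_dotProduct [CommSemiring K] (B : Matrix m n K) (x : n → K) :
    (Bᵀ * B) *ᵥ x ⬝ᵥ x = B *ᵥ x ⬝ᵥ B *ᵥ x := by
  rw [← mulVec_mulVec, dotProduct_comm, dotProduct_transpose_mulVec]

variable [DecidableEq m]

theorem image_mulVec_eq_preimage_mulVec_inv [CommRing K] {M : Matrix m m K} (hM : IsUnit M)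
    (s : Set (m → K)) : (M *ᵥ ·) '' s = (M⁻¹ *ᵥ ·) ⁻¹' s := by
  have hdet := (isUnit_iff_isUnit_det M).1 hM
  refine congrFun (image_eq_preimage_of_inverse (fun v => ?_) (fun v => ?_)) s
  · rw [mulVec_mulVec, nonsing_inv_mul _ hdet, one_mulVec]
  · rw [mulVec_mulVec, mul_nonsing_inv _ hdet, one_mulVec]

theorem image_mulVec_fromBlocks_inv_transpose [Field K] [LE K] {L : Matrix m m K}
    (hL : IsUnit L) (c : K) :
    (fromBlocks L⁻¹ 0 0 Lᵀ *ᵥ ·) '' {z | z ⬝ᵥ z ≤ c} =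
      {z | (Lᵀ * L) *ᵥ (z ∘ Sum.inl) ⬝ᵥ (z ∘ Sum.inl)
        + (Lᵀ * L)⁻¹ *ᵥ (z ∘ Sum.inr) ⬝ᵥ (z ∘ Sum.inr) ≤ c} := by
  have hdet := (isUnit_iff_isUnit_det L).1 hL
  have hLinv : IsUnit L⁻¹ := isUnit_nonsing_inv_iff.2 hL
  have hLT : IsUnit Lᵀ := (isUnit_transpose L).2 hL
  rw [image_mulVec_eq_preimage_mulVec_inv (isUnit_fromBlocks_zero₂₁.2 ⟨hLinv, hLT⟩),
    inv_fromBlocks_zero₂₁_of_isUnit_iff _ _ _ (iff_of_true hLinv hLT),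
    nonsing_inv_nonsing_inv _ hdet, mul_inv_rev, ← transpose_transpose L⁻¹, transpose_nonsing_inv]
  ext z
  simp only [mem_preimage, mem_ofPred_eq, fromBlocks_mulVec, Matrix.mul_zero, Matrix.zero_mul,
    neg_zero, zero_mulVec, add_zero, zero_add, sumElim_dotProduct_sumElim,
    transpose_mul_self_mulVec_dotProduct]

end Matrix

theorem isSymplectic_fromBlocks_inv_transpose {n : ℕ} {L : Matrix (Fin n) (Fin n) ℝ}
    (hL : IsUnit L) : IsSymplectic (fromBlocks L⁻¹ 0 0 Lᵀ) := by
  have hdet := (isUnit_iff_isUnit_det L).1 hL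
  rw [IsSymplectic, _root_.J, fromBlocks_transpose, transpose_transpose, fromBlocks_multiply,
    fromBlocks_multiply]
  simp [← transpose_mul, mul_nonsing_inv _ hdet]

section Projection

variable {α β γ : Type*} [AddCommMonoid γ] [PartialOrder γ] [IsOrderedAddMonoid γ]
  {f : α → γ} {g : β → γ} {c : γ}

theorem exists_add_le_iff_of_nonneg_right (hg : ∀ b, 0 ≤ g b) {b₀ : β} (hb₀ : g b₀ = 0)
    (a : α) : (∃ b, f a + g b ≤ c) ↔ f a ≤ c :=
  ⟨fun ⟨b, hb⟩ => (le_add_of_nonneg_right (hg b)).trans hb,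
    fun ha => ⟨b₀, by rwa [hb₀, add_zero]⟩⟩

theorem exists_add_le_iff_of_nonneg_left (hf : ∀ a, 0 ≤ f a) {a₀ : α} (ha₀ : f a₀ = 0)
    (b : β) : (∃ a, f a + g b ≤ c) ↔ g b ≤ c := by
  simpa only [add_comm] using exists_add_le_iff_of_nonneg_right (f := g) hf ha₀ b

end Projection

theorem john_ellipsoid_of_product_is_quantum_blob_general
    {n : ℕ} (ℏ : ℝ)
    (A : Matrix (Fin n) (Fin n) ℝ) (hA : A.PosDef)
    (X : Set (Fin n → ℝ)) (hX : X = {x | A.mulVec x ⬝ᵥ x ≤ ℏ})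
    (Xd : Set (Fin n → ℝ)) (hXd : Xd = {p | A⁻¹.mulVec p ⬝ᵥ p ≤ ℏ})
    (M : Matrix (Fin n ⊕ Fin n) (Fin n ⊕ Fin n) ℝ)
    (hM : M = Matrix.fromBlocks (hA.posSemidef.sqrt)⁻¹ 0 0 hA.posSemidef.sqrt)
    (Q : Set (Fin n ⊕ Fin n → ℝ))
    (hQ : Q = {z | A.mulVec (z ∘ Sum.inl) ⬝ᵥ (z ∘ Sum.inl)
        + A⁻¹.mulVec (z ∘ Sum.inr) ⬝ᵥ (z ∘ Sum.inr) ≤ ℏ}) :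
    IsSymplectic M
    ∧ (fun z => M.mulVec z) '' ballh n ℏ = Q
    ∧ Q ⊆ {z | (z ∘ Sum.inl) ∈ X ∧ (z ∘ Sum.inr) ∈ Xd}
    ∧ {x : Fin n → ℝ | ∃ p : Fin n → ℝ, Sum.elim x p ∈ Q} = X
    ∧ {p : Fin n → ℝ | ∃ x : Fin n → ℝ, Sum.elim x p ∈ Q} = Xd := by
  have hM' : M = fromBlocks hA.posSemidef.sqrt⁻¹ 0 0 hA.posSemidef.sqrtᵀ := by
    rw [hM, hA.posSemidef.transpose_sqrt]
  have hqA := hA.posSemidef.mulVec_dotProduct_nonneg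
  have hqA' := hA.inv.posSemidef.mulVec_dotProduct_nonneg
  subst hX hXd hQ
  refine ⟨hM' ▸ isSymplectic_fromBlocks_inv_transpose hA.isUnit_sqrt, ?_, ?_, ?_, ?_⟩
  · rw [hM', ballh, image_mulVec_fromBlocks_inv_transpose hA.isUnit_sqrt,
      hA.posSemidef.transpose_sqrt_mul_sqrt]
  · exact fun z hz => ⟨(le_add_of_nonneg_right (hqA' _)).trans hz,
      (le_add_of_nonneg_left (hqA _)).trans hz⟩
  · ext x
    simpa only [mem_ofPred_eq, Sum.elim_comp_inl, Sum.elim_comp_inr]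
      using exists_add_le_iff_of_nonneg_right hqA' (dotProduct_zero _) x
  · ext p
    simpa only [mem_ofPred_eq, Sum.elim_comp_inl, Sum.elim_comp_inr]
      using exists_add_le_iff_of_nonneg_left hqA (dotProduct_zero _) p

/-- for `X = {x : Ax·x ≤ ℏ}` (A symmetric positive definite),
`X^ℏ = {p : A⁻¹p·p ≤ ℏ}`, and `M = [[A^{-1/2},0],[0,A^{1/2}]]` (with `A^{1/2}` the
positive square root of `A`): (a) `M` is symplectic; (b) `M(B²ⁿ(√ℏ))` is the ellipsoid
`Q_A = {(x,p) : Ax·x + A⁻¹p·p ≤ ℏ}`; (c) `Q_A ⊆ X × X^ℏ`; (d) the orthogonal projections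
of `Q_A` on the `x`- and `p`-coordinates are `X` and `X^ℏ` respectively. -/
theorem john_ellipsoid_of_product_is_quantum_blob
    {n : ℕ} (ℏ : ℝ) (hℏ : 0 < ℏ)
    (A : Matrix (Fin n) (Fin n) ℝ) (hA : A.PosDef)
    (X : Set (Fin n → ℝ)) (hX : X = {x | A.mulVec x ⬝ᵥ x ≤ ℏ})
    (Xd : Set (Fin n → ℝ)) (hXd : Xd = {p | A⁻¹.mulVec p ⬝ᵥ p ≤ ℏ})
    (hXdual : Xd = polarDual ℏ X)
    (M : Matrix (Fin n ⊕ Fin n) (Fin n ⊕ Fin n) ℝ)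
    (hM : M = Matrix.fromBlocks (hA.posSemidef.sqrt)⁻¹ 0 0 hA.posSemidef.sqrt)
    (Q : Set (Fin n ⊕ Fin n → ℝ))
    (hQ : Q = {z | A.mulVec (z ∘ Sum.inl) ⬝ᵥ (z ∘ Sum.inl)
        + A⁻¹.mulVec (z ∘ Sum.inr) ⬝ᵥ (z ∘ Sum.inr) ≤ ℏ}) :
    IsSymplectic M
    ∧ (fun z => M.mulVec z) '' ballh n ℏ = Q
    ∧ Q ⊆ {z | (z ∘ Sum.inl) ∈ X ∧ (z ∘ Sum.inr) ∈ Xd}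
    ∧ {x : Fin n → ℝ | ∃ p : Fin n → ℝ, Sum.elim x p ∈ Q} = X
    ∧ {p : Fin n → ℝ | ∃ x : Fin n → ℝ, Sum.elim x p ∈ Q} = Xd :=
  john_ellipsoid_of_product_is_quantum_blob_general ℏ A hA X hX Xd hXd M hM Q hQ

end
end

section
/- For every symplectic matrix S ∈ Sp(n) and every subset Ω ⊆ ℝ^{2n}: (S(Ω))^{ℏ,ω} = S(Ω^{ℏ,ω}). In particular, every quantum blob is a fixed point of symplectic polar duality: (S(B^{2n}(√ℏ)))^{ℏ,ω} = S(B^{2n}(√ℏ)). -/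
open Matrix Set

noncomputable section

/-- The standard symplectic form `ω(z,z') = p·x' - p'·x = (Jz)·z'`. -/
def symplForm {n : ℕ} (z z' : Fin n ⊕ Fin n → ℝ) : ℝ :=
  (J n).mulVec z ⬝ᵥ z'

/-- The symplectic ℏ-polar dual `Ω^{ℏ,ω} = {z' : ω(z,z') ≤ ℏ for all z ∈ Ω}`. -/
def symplDual {n : ℕ} (ℏ : ℝ) (Ω : Set (Fin n ⊕ Fin n → ℝ)) : Set (Fin n ⊕ Fin n → ℝ) :=
  {z' | ∀ z ∈ Ω, symplForm z z' ≤ ℏ}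

lemma JmulJ (n : ℕ) : J n * J n = -1 := by
  simp [_root_.J, Matrix.fromBlocks_multiply]
  rw [← Matrix.fromBlocks_one, Matrix.fromBlocks_neg]
  simp

lemma Jtrans (n : ℕ) : (J n)ᵀ = -(J n) := by
  simp [_root_.J, Matrix.fromBlocks_transpose]
  rw [Matrix.fromBlocks_neg]
  simp

lemma dot_mulVec_left {n : ℕ} (A : Matrix (Fin n ⊕ Fin n) (Fin n ⊕ Fin n) ℝ)
    (u v : Fin n ⊕ Fin n → ℝ) : A.mulVec u ⬝ᵥ v = u ⬝ᵥ Aᵀ.mulVec v := by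
  rw [dotProduct_comm, Matrix.dotProduct_mulVec, ← Matrix.vecMul_transpose,
    Matrix.transpose_transpose, dotProduct_comm]

lemma dot_self_nonneg {n : ℕ} (v : Fin n ⊕ Fin n → ℝ) : 0 ≤ v ⬝ᵥ v :=
  Finset.sum_nonneg fun _ _ => mul_self_nonneg _

/-- symplectic invariance of the form -/
lemma symplForm_mulVec {n : ℕ} {S : Matrix (Fin n ⊕ Fin n) (Fin n ⊕ Fin n) ℝ}
    (hS : IsSymplectic S) (z z' : Fin n ⊕ Fin n → ℝ) :
    symplForm (S.mulVec z) (S.mulVec z') = symplForm z z' := by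
  unfold symplForm
  rw [Matrix.mulVec_mulVec]
  have h := dot_mulVec_left Sᵀ ((J n * S).mulVec z) z'
  rw [Matrix.transpose_transpose] at h
  rw [← h, Matrix.mulVec_mulVec, ← Matrix.mul_assoc, hS]

/-- inverse of a symplectic matrix -/
lemma sympl_inv {n : ℕ} {S : Matrix (Fin n ⊕ Fin n) (Fin n ⊕ Fin n) ℝ}
    (hS : IsSymplectic S) :
    S * (-(J n) * Sᵀ * J n) = 1 ∧ (-(J n) * Sᵀ * J n) * S = 1 := by
  have h1 : (-(J n) * Sᵀ * J n) * S = 1 := by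
    have := hS
    unfold IsSymplectic at this
    calc (-(J n) * Sᵀ * J n) * S = -(J n) * (Sᵀ * J n * S) := by
          rw [Matrix.mul_assoc, Matrix.mul_assoc, Matrix.mul_assoc]
    _ = -(J n) * J n := by rw [this]
    _ = 1 := by rw [neg_mul, JmulJ]; simp
  exact ⟨mul_eq_one_comm.mpr h1, h1⟩


lemma symplDual_ball {n : ℕ} (ℏ : ℝ) (hℏ : 0 < ℏ) :
    symplDual ℏ (ballh n ℏ) = ballh n ℏ := by
  have hJJ' : (J n)ᵀ * J n = 1 := by rw [Jtrans, neg_mul, JmulJ]; simp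
  ext z'
  simp only [symplDual, ballh, mem_setOf_eq]
  constructor
  · intro h
    by_contra hgt
    push_neg at hgt
    set a := z' ⬝ᵥ z' with ha_def
    have ha : 0 < a := lt_trans hℏ hgt
    set c := Real.sqrt (ℏ / a) with hc_def
    have hc : 0 < c := Real.sqrt_pos.mpr (by positivity)
    have hc2 : c ^ 2 = ℏ / a := Real.sq_sqrt (by positivity)
    set w := c • z' with hw_def
    set z := (-(J n)).mulVec w with hz_def
    have hJz : (J n).mulVec z = w := by
      rw [hz_def, Matrix.mulVec_mulVec, Matrix.mul_neg, JmulJ]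
      simp
    have hc2a : c ^ 2 * a = ℏ := by rw [hc2]; field_simp
    have hww : w ⬝ᵥ w = ℏ := by
      rw [hw_def, smul_dotProduct, dotProduct_smul, smul_eq_mul, smul_eq_mul,
        ← ha_def]
      linear_combination hc2a
    have hzz : z ⬝ᵥ z = ℏ := by
      rw [hz_def, dot_mulVec_left, Matrix.mulVec_mulVec, Matrix.transpose_neg,
        Matrix.neg_mul, Matrix.mul_neg, neg_neg, hJJ', Matrix.one_mulVec, hww]
    have hle := h z (le_of_eq hzz)
    rw [symplForm, hJz, hw_def, smul_dotProduct, smul_eq_mul, ← ha_def] at hle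
    have hca2 : (c * a) ^ 2 = ℏ * a := by linear_combination a * hc2a
    nlinarith [mul_pos hc ha, hca2, hgt, hℏ]
  · intro h z hz
    rw [symplForm]
    set w := (J n).mulVec z with hw_def
    have hww : w ⬝ᵥ w = z ⬝ᵥ z := by
      rw [hw_def, dot_mulVec_left, Matrix.mulVec_mulVec, hJJ', Matrix.one_mulVec]
    have cs : (w ⬝ᵥ z') ^ 2 ≤ (w ⬝ᵥ w) * (z' ⬝ᵥ z') := by
      simpa [dotProduct, sq] using Finset.sum_mul_sq_le_sq_mul_sq Finset.univ w z'
    nlinarith [dot_self_nonneg w, dot_self_nonneg z', hww, hz, h, hℏ, cs]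

/-- symplectic covariance of symplectic polar duality,
`(SΩ)^{ℏ,ω} = S(Ω^{ℏ,ω})` for every `S ∈ Sp(n)`; in particular every quantum blob
`S(B²ⁿ(√ℏ))` is a fixed point of symplectic polar duality. -/
theorem symplDual_symplectic_covariance
    {n : ℕ} (ℏ : ℝ) (hℏ : 0 < ℏ)
    (S : Matrix (Fin n ⊕ Fin n) (Fin n ⊕ Fin n) ℝ) (hS : IsSymplectic S)
    (Ω : Set (Fin n ⊕ Fin n → ℝ)) :
    symplDual ℏ ((fun z => S.mulVec z) '' Ω) = (fun z => S.mulVec z) '' symplDual ℏ Ω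
    ∧ symplDual ℏ ((fun z => S.mulVec z) '' ballh n ℏ)
        = (fun z => S.mulVec z) '' ballh n ℏ := by
  obtain ⟨hST, hTS⟩ := sympl_inv hS
  set T := -(J n) * Sᵀ * J n with hT
  have hbij : ∀ v, S.mulVec (T.mulVec v) = v := fun v => by
    rw [Matrix.mulVec_mulVec, hST, Matrix.one_mulVec]
  have main : ∀ Ω' : Set (Fin n ⊕ Fin n → ℝ),
      symplDual ℏ ((fun z => S.mulVec z) '' Ω') = (fun z => S.mulVec z) '' symplDual ℏ Ω' := by
    intro Ω'
    ext z'
    constructor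
    · intro h
      refine ⟨T.mulVec z', fun z hz => ?_, hbij z'⟩
      have h1 := h (S.mulVec z) ⟨z, hz, rfl⟩
      calc symplForm z (T.mulVec z')
          = symplForm (S.mulVec z) (S.mulVec (T.mulVec z')) := (symplForm_mulVec hS _ _).symm
        _ = symplForm (S.mulVec z) z' := by rw [hbij]
        _ ≤ ℏ := h1
    · rintro ⟨w, hw, rfl⟩ z ⟨y, hy, rfl⟩
      rw [symplForm_mulVec hS]
      exact hw y hy
  refine ⟨main Ω, ?_⟩
  rw [main (ballh n ℏ), symplDual_ball ℏ hℏ]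
end
end

section
/- Let M be a real symmetric positive definite 2n×2n matrix and Ω := {z ∈ ℝ^{2n} : Mz·z ≤ ℏ}. Then Ω^{ℏ,ω} = Ω if and only if Ω is a quantum blob, i.e. if and only if there exists S ∈ Sp(n) such that Ω = S(B^{2n}(√ℏ)). -/
/-!
For positive definite `M`, the polar dual of the ellipsoid `{Mz·z ≤ ℏ}` is `{M⁻¹z·z ≤ ℏ}`
(reduce to the ball by writing `M = AᵀA`), so its symplectic dual is the ellipsoid of
`J M⁻¹ Jᵀ`. An ellipsoid determines its matrix, hence self-duality means `J M⁻¹ Jᵀ = M`,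
i.e. `M` is symplectic. The image `S(B)` of the ball is the ellipsoid of `(S⁻¹)ᵀS⁻¹`, which is
symplectic when `S` is; conversely, if `M` is symplectic then so is its positive square root `R`,
because `J R⁻¹ Jᵀ` is another positive square root of `J M⁻¹ Jᵀ = M`, and `Ω = R⁻¹(B)`.
-/

open Matrix Set

noncomputable section

open scoped MatrixOrder

section Ellipsoid

variable {m : Type*} [Fintype m]

def ellipsoid (ℏ : ℝ) (M : Matrix m m ℝ) : Set (m → ℝ) :=
  {z | M *ᵥ z ⬝ᵥ z ≤ ℏ}

def polar (ℏ : ℝ) (Ω : Set (m → ℝ)) : Set (m → ℝ) :=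
  {w | ∀ z ∈ Ω, w ⬝ᵥ z ≤ ℏ}

variable {ℏ : ℝ}

theorem smul_mem_ellipsoid_iff (M : Matrix m m ℝ) (t : ℝ) (z : m → ℝ) :
    t • z ∈ ellipsoid ℏ M ↔ t ^ 2 * (M *ᵥ z ⬝ᵥ z) ≤ ℏ := by
  simp only [ellipsoid, mem_ofPred_eq, mulVec_smul, smul_dotProduct, dotProduct_smul, smul_eq_mul]
  ring_nf

theorem preimage_mulVec_ellipsoid (A M : Matrix m m ℝ) :
    (A *ᵥ ·) ⁻¹' ellipsoid ℏ M = ellipsoid ℏ (Aᵀ * M * A) := by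
  ext z
  simp only [ellipsoid, mem_preimage, mem_ofPred_eq, ← mulVec_mulVec, mulVec_transpose,
    ← dotProduct_mulVec]

theorem image_mulVec_ellipsoid [DecidableEq m] {A : Matrix m m ℝ} (hA : IsUnit A)
    (M : Matrix m m ℝ) :
    (A *ᵥ ·) '' ellipsoid ℏ M = ellipsoid ℏ (A⁻¹ᵀ * M * A⁻¹) := by
  rw [← preimage_mulVec_ellipsoid, image_eq_preimage_of_inverse]
  · intro z
    simp [mulVec_mulVec, nonsing_inv_mul _ ((isUnit_iff_isUnit_det A).mp hA)]
  · intro z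
    simp [mulVec_mulVec, mul_nonsing_inv _ ((isUnit_iff_isUnit_det A).mp hA)]

theorem polar_image_mulVec (A : Matrix m m ℝ) (Ω : Set (m → ℝ)) :
    polar ℏ ((A *ᵥ ·) '' Ω) = (Aᵀ *ᵥ ·) ⁻¹' polar ℏ Ω := by
  ext w
  simp [polar, dotProduct_mulVec, mulVec_transpose]

theorem polar_ellipsoid_one [DecidableEq m] (hℏ : 0 < ℏ) :
    polar ℏ (ellipsoid ℏ (1 : Matrix m m ℝ)) = ellipsoid ℏ 1 := by
  ext w
  simp only [polar, ellipsoid, one_mulVec, mem_ofPred_eq]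
  constructor
  · intro hw
    by_contra! hlt
    set a := w ⬝ᵥ w
    -- the scaling `t = 2ℏ/(a + ℏ)` satisfies `t² a ≤ ℏ < t a` by AM-GM
    set t := 2 * ℏ / (a + ℏ)
    have ht : t * (a + ℏ) = 2 * ℏ := div_mul_cancel₀ _ (by linarith : 0 < a + ℏ).ne'
    have hz := hw (t • w)
    simp only [smul_dotProduct, dotProduct_smul, smul_eq_mul] at hz
    have ht1 : t < 1 := by nlinarith
    nlinarith [hz (by nlinarith [sq_nonneg (1 - t)])]
  · intro hw z hz
    -- AM-GM: `2 w ⬝ z ≤ w ⬝ w + z ⬝ z`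
    have := dotProduct_self_star_nonneg (w - z)
    simp only [star_trivial, sub_dotProduct, dotProduct_sub, dotProduct_comm z w] at this
    linarith

theorem polar_ellipsoid [DecidableEq m] (hℏ : 0 < ℏ) {M : Matrix m m ℝ} (hM : M.PosDef) :
    polar ℏ (ellipsoid ℏ M) = ellipsoid ℏ M⁻¹ := by
  obtain ⟨A, rfl⟩ := CStarAlgebra.nonneg_iff_eq_star_mul_self.mp hM.posSemidef.nonneg
  rw [star_eq_conjTranspose, conjTranspose_eq_transpose_of_trivial] at hM ⊢
  have hA : IsUnit A.det := by
    have := (isUnit_iff_isUnit_det _).mp hM.isUnit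
    rw [det_mul] at this
    exact isUnit_of_mul_isUnit_right this
  have hE : ellipsoid ℏ (Aᵀ * A) = (A⁻¹ *ᵥ ·) '' ellipsoid ℏ 1 := by
    rw [image_mulVec_ellipsoid ((isUnit_iff_isUnit_det _).mpr (isUnit_nonsing_inv_det A hA)),
      nonsing_inv_nonsing_inv A hA, mul_one]
  rw [hE, polar_image_mulVec, polar_ellipsoid_one hℏ, preimage_mulVec_ellipsoid,
    transpose_transpose, mul_one, Matrix.mul_inv_rev, transpose_nonsing_inv]

theorem le_of_ellipsoid_subset (hℏ : 0 < ℏ) {M N : Matrix m m ℝ} (hM : M.PosDef)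
    (hN : N.IsHermitian) (h : ellipsoid ℏ M ⊆ ellipsoid ℏ N) : N ≤ M := by
  refine Matrix.le_iff.mpr (PosSemidef.of_dotProduct_mulVec_nonneg (hM.1.sub hN) fun z => ?_)
  rcases eq_or_ne z 0 with rfl | hz
  · simp
  have ha := hM.dotProduct_mulVec_pos hz
  rw [star_trivial, dotProduct_comm] at ha ⊢
  rw [sub_mulVec, sub_dotProduct, sub_nonneg]
  -- rescale `z` onto the boundary of the first ellipsoid
  set t := √(ℏ / (M *ᵥ z ⬝ᵥ z))
  have ht : t ^ 2 * (M *ᵥ z ⬝ᵥ z) = ℏ := by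
    rw [Real.sq_sqrt (div_pos hℏ ha).le, div_mul_cancel₀ _ ha.ne']
  have hN := (smul_mem_ellipsoid_iff N t z).mp (h ((smul_mem_ellipsoid_iff M t z).mpr ht.le))
  have ht0 : 0 < t ^ 2 := by nlinarith
  exact le_of_mul_le_mul_left (hN.trans ht.ge) ht0

theorem ellipsoid_inj (hℏ : 0 < ℏ) {M N : Matrix m m ℝ} (hM : M.PosDef) (hN : N.PosDef) :
    ellipsoid ℏ M = ellipsoid ℏ N ↔ M = N :=
  ⟨fun h => le_antisymm (le_of_ellipsoid_subset hℏ hN hM.1 h.ge)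
    (le_of_ellipsoid_subset hℏ hM hN.1 h.le), congrArg _⟩

end Ellipsoid

section Symplectic

variable {l : Type*} [Fintype l] [DecidableEq l]

theorem J_transpose_mul_J (R : Type*) [CommRing R] :
    (Matrix.J l R)ᵀ * Matrix.J l R = 1 := by
  rw [J_transpose, neg_mul, J_squared, neg_neg]

theorem J_mul_J_transpose (R : Type*) [CommRing R] :
    Matrix.J l R * (Matrix.J l R)ᵀ = 1 := by
  rw [J_transpose, mul_neg, J_squared, neg_neg]

theorem isUnit_of_mem_symplecticGroup {R : Type*} [CommRing R] {S : Matrix (l ⊕ l) (l ⊕ l) R}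
    (hS : S ∈ symplecticGroup l R) : IsUnit S :=
  (isUnit_iff_isUnit_det S).mpr (SymplecticGroup.symplectic_det hS)

theorem inv_mem_symplecticGroup {R : Type*} [CommRing R] {S : Matrix (l ⊕ l) (l ⊕ l) R}
    (hS : S ∈ symplecticGroup l R) : S⁻¹ ∈ symplecticGroup l R := by
  simpa only [SymplecticGroup.coe_inv'] using (⟨S, hS⟩⁻¹ : symplecticGroup l R).2

theorem mem_symplecticGroup_iff_J_mul_inv_mul_J_transpose_eq_self {R : Type*} [CommRing R]
    {M : Matrix (l ⊕ l) (l ⊕ l) R} (hM : M.IsSymm) (hdet : IsUnit M.det) :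
    M ∈ symplecticGroup l R ↔ Matrix.J l R * M⁻¹ * (Matrix.J l R)ᵀ = M := by
  rw [SymplecticGroup.mem_iff, hM.eq]
  constructor
  · intro h
    calc Matrix.J l R * M⁻¹ * (Matrix.J l R)ᵀ
        = M * Matrix.J l R * M * M⁻¹ * (Matrix.J l R)ᵀ := by rw [h]
      _ = M := by simp only [mul_assoc, mul_nonsing_inv_cancel_left _ _ hdet, J_mul_J_transpose,
          mul_one]
  · intro h
    calc M * Matrix.J l R * M
        = Matrix.J l R * M⁻¹ * (Matrix.J l R)ᵀ * Matrix.J l R * M := by rw [h]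
      _ = Matrix.J l R := by simp only [mul_assoc, J_transpose_mul_J,
          nonsing_inv_mul _ hdet, mul_one]

theorem exists_mem_symplecticGroup_transpose_mul_self_eq {M : Matrix (l ⊕ l) (l ⊕ l) ℝ}
    (hM : M.PosSemidef) (hMs : M ∈ symplecticGroup l ℝ) :
    ∃ R ∈ symplecticGroup l ℝ, Rᵀ * R = M := by
  have hMsymm : M.IsSymm := isHermitian_iff_isSymm.mp hM.1
  set R := CFC.sqrt M
  have hR : R.PosSemidef := (CFC.sqrt_nonneg M).posSemidef
  have hRsymm : R.IsSymm := isHermitian_iff_isSymm.mp hR.1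
  have hRR : R * R = M := CFC.sqrt_mul_sqrt_self M hM.nonneg
  have hRdet : IsUnit R.det := by
    have := SymplecticGroup.symplectic_det hMs
    rw [← hRR, det_mul] at this
    exact isUnit_of_mul_isUnit_left this
  refine ⟨R, ?_, by rw [hRsymm.eq, hRR]⟩
  rw [mem_symplecticGroup_iff_J_mul_inv_mul_J_transpose_eq_self hRsymm hRdet]
  -- `J R⁻¹ Jᵀ` is a positive semidefinite square root of `J M⁻¹ Jᵀ = M`
  have hM' : Matrix.J l ℝ * M⁻¹ * (Matrix.J l ℝ)ᵀ = M :=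
    (mem_symplecticGroup_iff_J_mul_inv_mul_J_transpose_eq_self hMsymm
      (SymplecticGroup.symplectic_det hMs)).mp hMs
  refine (CFC.sqrt_unique ?_ ?_).symm
  · have hJJ (X : Matrix (l ⊕ l) (l ⊕ l) ℝ) : (Matrix.J l ℝ)ᵀ * (Matrix.J l ℝ * X) = X := by
      rw [← mul_assoc, J_transpose_mul_J, one_mul]
    rw [← hM', ← hRR, Matrix.mul_inv_rev]
    simp only [mul_assoc, hJJ]
  · simpa only [conjTranspose_eq_transpose_of_trivial] using
      (hR.inv.mul_mul_conjTranspose_same (Matrix.J l ℝ)).nonneg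

theorem exists_mem_symplecticGroup_image_ellipsoid_one_iff {ℏ : ℝ} (hℏ : 0 < ℏ)
    {M : Matrix (l ⊕ l) (l ⊕ l) ℝ} (hM : M.PosDef) :
    (∃ S ∈ symplecticGroup l ℝ, ellipsoid ℏ M = (S *ᵥ ·) '' ellipsoid ℏ 1) ↔
      M ∈ symplecticGroup l ℝ := by
  constructor
  · rintro ⟨S, hS, hMS⟩
    have hSinv := inv_mem_symplecticGroup hS
    have hPD : (S⁻¹ᵀ * S⁻¹).PosDef := by
      simpa only [conjTranspose_eq_transpose_of_trivial] using
        PosDef.conjTranspose_mul_self _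
          (mulVec_injective_of_isUnit (isUnit_of_mem_symplecticGroup hSinv))
    rw [image_mulVec_ellipsoid (isUnit_of_mem_symplecticGroup hS), mul_one,
      ellipsoid_inj hℏ hM hPD] at hMS
    rw [hMS]
    exact mul_mem (SymplecticGroup.transpose_mem hSinv) hSinv
  · intro hMs
    obtain ⟨R, hR, rfl⟩ := exists_mem_symplecticGroup_transpose_mul_self_eq hM.posSemidef hMs
    refine ⟨R⁻¹, inv_mem_symplecticGroup hR, ?_⟩
    rw [image_mulVec_ellipsoid (isUnit_of_mem_symplecticGroup (inv_mem_symplecticGroup hR)),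
      nonsing_inv_nonsing_inv R (SymplecticGroup.symplectic_det hR), mul_one]

end Symplectic

theorem J_eq_neg_J (n : ℕ) : J n = -Matrix.J (Fin n) ℝ := by
  simp [_root_.J, Matrix.J, fromBlocks_neg]

theorem isSymplectic_iff_mem_symplecticGroup {n : ℕ}
    {S : Matrix (Fin n ⊕ Fin n) (Fin n ⊕ Fin n) ℝ} :
    IsSymplectic S ↔ S ∈ symplecticGroup (Fin n) ℝ := by
  rw [IsSymplectic, SymplecticGroup.mem_iff', J_eq_neg_J, mul_neg, neg_mul, neg_inj]

theorem ballh_eq_ellipsoid_one (n : ℕ) (ℏ : ℝ) : ballh n ℏ = ellipsoid ℏ 1 := by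
  simp [ballh, ellipsoid]

theorem symplDual_eq_preimage_polar {n : ℕ} (ℏ : ℝ) (Ω : Set (Fin n ⊕ Fin n → ℝ)) :
    symplDual ℏ Ω = ((J n)ᵀ *ᵥ ·) ⁻¹' polar ℏ Ω := by
  ext w
  simp [symplDual, polar, symplForm, mulVec_transpose, dotProduct_comm _ w, dotProduct_mulVec]

theorem symplDual_ellipsoid {n : ℕ} {ℏ : ℝ} (hℏ : 0 < ℏ)
    {M : Matrix (Fin n ⊕ Fin n) (Fin n ⊕ Fin n) ℝ} (hM : M.PosDef) :
    symplDual ℏ (ellipsoid ℏ M) =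
      ellipsoid ℏ (Matrix.J (Fin n) ℝ * M⁻¹ * (Matrix.J (Fin n) ℝ)ᵀ) := by
  rw [symplDual_eq_preimage_polar, polar_ellipsoid hℏ hM, preimage_mulVec_ellipsoid,
    transpose_transpose, J_eq_neg_J, transpose_neg, neg_mul, neg_mul, mul_neg, neg_neg]

theorem symplDual_ellipsoid_eq_self_iff {n : ℕ} {ℏ : ℝ} (hℏ : 0 < ℏ)
    {M : Matrix (Fin n ⊕ Fin n) (Fin n ⊕ Fin n) ℝ} (hM : M.PosDef) :
    symplDual ℏ (ellipsoid ℏ M) = ellipsoid ℏ M ↔ M ∈ symplecticGroup (Fin n) ℝ := by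
  have hJ : IsUnit (Matrix.J (Fin n) ℝ) := (isUnit_iff_isUnit_det _).mpr (isUnit_det_J _ _)
  have hPD : (Matrix.J (Fin n) ℝ * M⁻¹ * (Matrix.J (Fin n) ℝ)ᵀ).PosDef := by
    simpa only [star_eq_conjTranspose, conjTranspose_eq_transpose_of_trivial] using
      (Matrix.IsUnit.posDef_star_right_conjugate_iff hJ).mpr hM.inv
  rw [symplDual_ellipsoid hℏ hM, ellipsoid_inj hℏ hPD hM,
    mem_symplecticGroup_iff_J_mul_inv_mul_J_transpose_eq_self (isHermitian_iff_isSymm.mp hM.1)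
      ((isUnit_iff_isUnit_det M).mp hM.isUnit)]

/-- the ellipsoid `Ω = {z : Mz·z ≤ ℏ}` (`M` symmetric positive definite)
satisfies `Ω^{ℏ,ω} = Ω` if and only if `Ω` is a quantum blob `S(B²ⁿ(√ℏ))`, `S ∈ Sp(n)`. -/
theorem symplDual_eq_self_iff_quantum_blob
    {n : ℕ} (ℏ : ℝ) (hℏ : 0 < ℏ)
    (M : Matrix (Fin n ⊕ Fin n) (Fin n ⊕ Fin n) ℝ) (hM : M.PosDef)
    (Ω : Set (Fin n ⊕ Fin n → ℝ)) (hΩ : Ω = {z | M.mulVec z ⬝ᵥ z ≤ ℏ}) :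
    symplDual ℏ Ω = Ω
      ↔ ∃ S : Matrix (Fin n ⊕ Fin n) (Fin n ⊕ Fin n) ℝ,
          IsSymplectic S ∧ Ω = (fun z => S.mulVec z) '' ballh n ℏ := by
  obtain rfl : Ω = ellipsoid ℏ M := hΩ
  simp only [isSymplectic_iff_mem_symplecticGroup, ballh_eq_ellipsoid_one]
  rw [symplDual_ellipsoid_eq_self_iff hℏ hM,
    exists_mem_symplecticGroup_image_ellipsoid_one_iff hℏ hM]
end
end

section
/- Let M be a real symmetric positive definite 2n×2n matrix with n×n blocks M = [[M_XX, M_XP],[M_PX, M_PP]] and let Ω := {z ∈ ℝ^{2n} : Mz·z ≤ ℏ}. Then the orthogonal projection of Ω onto the x-coordinate subspace ℝⁿ × 0 is {x ∈ ℝⁿ : (M/M_PP)x·x ≤ ℏ}, and the orthogonal projection of Ω onto the p-coordinate subspace 0 × ℝⁿ is {p ∈ ℝⁿ : (M/M_XX)p·p ≤ ℏ}. -/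
/-!
Completing the square in `p`: since `M_PX = M_XPᵀ`,
`Mz·z = (M/M_PP)x·x + M_PP w·w` with `w = p + M_PP⁻¹ M_PX x`. The second term is nonnegative
and vanishes for `p = -M_PP⁻¹ M_PX x`, so `x` lies in the projection exactly when
`(M/M_PP)x·x ≤ ℏ`. Exchanging the roles of the two blocks gives the projection on the `p`-space.
-/

open Matrix

namespace Matrix

variable {m n : Type*} [Fintype m] [Fintype n]

lemma mulVec_dotProduct_self_eq_star_vecMul (M : Matrix n n ℝ) (v : n → ℝ) :
    M *ᵥ v ⬝ᵥ v = star v ᵥ* M ⬝ᵥ v := by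
  rw [star_trivial, dotProduct_comm, dotProduct_mulVec]

lemma fromBlocks_mulVec_sumElim_dotProduct_sumElim_swap {R : Type*} [CommSemiring R]
    (A : Matrix m m R) (B : Matrix m n R) (C : Matrix n m R) (D : Matrix n n R)
    (x : m → R) (y : n → R) :
    fromBlocks A B C D *ᵥ Sum.elim x y ⬝ᵥ Sum.elim x y
      = fromBlocks D C B A *ᵥ Sum.elim y x ⬝ᵥ Sum.elim y x := by
  simp only [fromBlocks_mulVec, sumElim_dotProduct_sumElim, add_dotProduct,
    Sum.elim_comp_inl, Sum.elim_comp_inr]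
  ring

theorem exists_fromBlocks_mulVec_dotProduct_le_iff_schur₂₂ [DecidableEq n] (A : Matrix m m ℝ)
    (B : Matrix m n ℝ) {D : Matrix n n ℝ} (hD : D.PosDef) (x : m → ℝ) (c : ℝ) :
    (∃ y, fromBlocks A B Bᵀ D *ᵥ Sum.elim x y ⬝ᵥ Sum.elim x y ≤ c)
      ↔ (A - B * D⁻¹ * Bᵀ) *ᵥ x ⬝ᵥ x ≤ c := by
  let := hD.isUnit.invertible
  have completed_square : ∀ y, fromBlocks A B Bᵀ D *ᵥ Sum.elim x y ⬝ᵥ Sum.elim x y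
      = D *ᵥ ((D⁻¹ * Bᵀ) *ᵥ x + y) ⬝ᵥ ((D⁻¹ * Bᵀ) *ᵥ x + y)
        + (A - B * D⁻¹ * Bᵀ) *ᵥ x ⬝ᵥ x := by
    intro y
    simp only [mulVec_dotProduct_self_eq_star_vecMul, ← conjTranspose_eq_transpose_of_trivial]
    exact schur_complement_eq₂₂ A B x y hD.isHermitian
  constructor
  · rintro ⟨y, hy⟩
    have hnonneg := hD.posSemidef.dotProduct_mulVec_nonneg ((D⁻¹ * Bᵀ) *ᵥ x + y)
    rw [star_trivial, dotProduct_comm] at hnonneg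
    linarith [completed_square y]
  · intro hx
    exact ⟨-((D⁻¹ * Bᵀ) *ᵥ x), by simpa [completed_square] using hx⟩

theorem exists_fromBlocks_mulVec_dotProduct_le_iff_schur₁₁ [DecidableEq m] {A : Matrix m m ℝ}
    (hA : A.PosDef) (B : Matrix m n ℝ) (D : Matrix n n ℝ) (y : n → ℝ) (c : ℝ) :
    (∃ x, fromBlocks A B Bᵀ D *ᵥ Sum.elim x y ⬝ᵥ Sum.elim x y ≤ c)
      ↔ (D - Bᵀ * A⁻¹ * B) *ᵥ y ⬝ᵥ y ≤ c := by
  simpa only [fromBlocks_mulVec_sumElim_dotProduct_sumElim_swap A, transpose_transpose] using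
    exists_fromBlocks_mulVec_dotProduct_le_iff_schur₂₂ D Bᵀ hA y c

end Matrix

theorem projections_of_ellipsoid_general
    {n : ℕ} (ℏ : ℝ)
    (MXX MXP MPX MPP : Matrix (Fin n) (Fin n) ℝ)
    (hM : (Matrix.fromBlocks MXX MXP MPX MPP).PosDef)
    (Ω : Set (Fin n ⊕ Fin n → ℝ))
    (hΩ : Ω = {z | (Matrix.fromBlocks MXX MXP MPX MPP).mulVec z ⬝ᵥ z ≤ ℏ}) :
    {x : Fin n → ℝ | ∃ p : Fin n → ℝ, Sum.elim x p ∈ Ω}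
        = {x | (MXX - MXP * MPP⁻¹ * MPX).mulVec x ⬝ᵥ x ≤ ℏ}
    ∧ {p : Fin n → ℝ | ∃ x : Fin n → ℝ, Sum.elim x p ∈ Ω}
        = {p | (MPP - MPX * MXX⁻¹ * MXP).mulVec p ⬝ᵥ p ≤ ℏ} := by
  obtain ⟨-, hMPX, -, -⟩ := isHermitian_fromBlocks_iff.mp hM.isHermitian
  rw [conjTranspose_eq_transpose_of_trivial] at hMPX
  subst hMPX hΩ
  have hMXX : MXX.PosDef := hM.submatrix Sum.inl_injective
  have hMPP : MPP.PosDef := hM.submatrix Sum.inr_injective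
  refine ⟨Set.ext fun x => ?_, Set.ext fun p => ?_⟩
  · exact exists_fromBlocks_mulVec_dotProduct_le_iff_schur₂₂ MXX MXP hMPP x ℏ
  · exact exists_fromBlocks_mulVec_dotProduct_le_iff_schur₁₁ hMXX MXP MPP p ℏ

/-- for a symmetric positive definite block matrix
`M = [[MXX, MXP],[MPX, MPP]]` and `Ω = {z : Mz·z ≤ ℏ}`, the orthogonal projection
of `Ω` on the `x`-space is `{x : (M/MPP)x·x ≤ ℏ}` and the orthogonal projection on
the `p`-space is `{p : (M/MXX)p·p ≤ ℏ}`, where `M/MPP = MXX - MXP MPP⁻¹ MPX` and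
`M/MXX = MPP - MPX MXX⁻¹ MXP` are the Schur complements. -/
theorem projections_of_ellipsoid
    {n : ℕ} (ℏ : ℝ) (hℏ : 0 < ℏ)
    (MXX MXP MPX MPP : Matrix (Fin n) (Fin n) ℝ)
    (hM : (Matrix.fromBlocks MXX MXP MPX MPP).PosDef)
    (Ω : Set (Fin n ⊕ Fin n → ℝ))
    (hΩ : Ω = {z | (Matrix.fromBlocks MXX MXP MPX MPP).mulVec z ⬝ᵥ z ≤ ℏ}) :
    {x : Fin n → ℝ | ∃ p : Fin n → ℝ, Sum.elim x p ∈ Ω}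
        = {x | (MXX - MXP * MPP⁻¹ * MPX).mulVec x ⬝ᵥ x ≤ ℏ}
    ∧ {p : Fin n → ℝ | ∃ x : Fin n → ℝ, Sum.elim x p ∈ Ω}
        = {p | (MPP - MPX * MXX⁻¹ * MXP).mulVec p ⬝ᵥ p ≤ ℏ} :=
  projections_of_ellipsoid_general ℏ MXX MXP MPX MPP hM Ω hΩ
end

section
/- Let M be a real symmetric positive definite 2n×2n matrix with n×n blocks M = [[M_XX, M_XP],[M_PX, M_PP]] and let Ω := {z ∈ ℝ^{2n} : Mz·z ≤ ℏ}. Then Ω is a quantum blob (i.e. Ω = S(B^{2n}(√ℏ)) for some S ∈ Sp(n), equivalently M = (SSᵀ)⁻¹ with S ∈ Sp(n), equivalently M itself is symplectic) if and only if M_XX M_PP − M_XP M_XP = Iₙ and M_PX M_PP = M_PP M_XP. -/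
/-!
The image of the ball `{z ⬝ᵥ z ≤ ℏ}` under an invertible `S` is the ellipsoid of `(S⁻¹)ᵀ S⁻¹`,
and two positive definite forms with the same sublevel set coincide, so `Ω` is a quantum blob iff
`M = (S⁻¹)ᵀ S⁻¹` for a symplectic `S`; this makes `M` symplectic. Conversely, if
`M` is symplectic then `M⁻¹ = Jᵀ M J`, and since the positive square root commutes with inversion
and with conjugation by the orthogonal matrix `J`, `√M` is symplectic too; take `S = (√M)⁻¹`.
For symmetric `M` the symplectic block conditions are `MXX MPP − MXP MXP = 1`, `MPX MPP = MPP MXP`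
and `MXX MPX = MXP MXX`, and the last follows from the first two after right multiplication by
the invertible block `MPP`.
-/

open Matrix Set

noncomputable section

open scoped MatrixOrder

namespace CFC

variable {A : Type*} [PartialOrder A] [Ring A] [StarRing A] [TopologicalSpace A]
  [Module ℝ A] [SMulCommClass ℝ A A] [IsScalarTower ℝ A A] [StarOrderedRing A]
  [NonUnitalContinuousFunctionalCalculus ℝ A IsSelfAdjoint] [NonnegSpectrumClass ℝ A]
  [IsSemitopologicalRing A] [T2Space A]

theorem sqrt_star_mul_mul {a u : A} (hu : u * star u = 1) (ha : 0 ≤ a) :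
    sqrt (star u * a * u) = star u * sqrt a * u := by
  refine sqrt_unique ?_ (star_left_conjugate_nonneg (sqrt_nonneg a) u)
  calc star u * sqrt a * u * (star u * sqrt a * u)
      = star u * (sqrt a * (u * star u) * sqrt a) * u := by simp only [mul_assoc]
    _ = star u * a * u := by rw [hu, mul_one, sqrt_mul_sqrt_self a]

end CFC

namespace Matrix

variable {m R : Type*} [Fintype m]

theorem mulVec_smul_dotProduct_smul [CommSemiring R] (A : Matrix m m R) (t : R) (z : m → R) :
    A *ᵥ (t • z) ⬝ᵥ (t • z) = t ^ 2 * (A *ᵥ z ⬝ᵥ z) := by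
  rw [mulVec_smul, smul_dotProduct, dotProduct_smul, smul_smul, smul_eq_mul, sq]

theorem transpose_mul_self_mulVec_dotProduct_s12 [CommSemiring R] (A : Matrix m m R) (z : m → R) :
    (Aᵀ * A) *ᵥ z ⬝ᵥ z = A *ᵥ z ⬝ᵥ A *ᵥ z := by
  rw [← mulVec_mulVec, dotProduct_comm, dotProduct_mulVec, vecMul_transpose]

theorem image_mulVec_setOf_dotProduct_self_le [DecidableEq m] [CommRing R] [LE R]
    {S : Matrix m m R} (hS : IsUnit S) (c : R) :
    (S *ᵥ ·) '' {z | z ⬝ᵥ z ≤ c} = {w | (S⁻¹ᵀ * S⁻¹) *ᵥ w ⬝ᵥ w ≤ c} := by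
  have hdet := (isUnit_iff_isUnit_det S).mp hS
  rw [Set.image_eq_preimage_of_inverse (f := (S *ᵥ ·)) (g := (S⁻¹ *ᵥ ·))]
  · ext w
    simp only [Set.mem_preimage, Set.mem_ofPred_eq, transpose_mul_self_mulVec_dotProduct_s12]
  · intro z
    simp only [mulVec_mulVec, nonsing_inv_mul S hdet, one_mulVec]
  · intro z
    simp only [mulVec_mulVec, mul_nonsing_inv S hdet, one_mulVec]

theorem IsSymm.ext_of_mulVec_dotProduct_self [DecidableEq m] [Field R] [NeZero (2 : R)]
    {A B : Matrix m m R} (hA : A.IsSymm) (hB : B.IsSymm)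
    (h : ∀ z, A *ᵥ z ⬝ᵥ z = B *ᵥ z ⬝ᵥ z) : A = B := by
  set C := A - B
  have hCsymm : ∀ z w, C *ᵥ w ⬝ᵥ z = C *ᵥ z ⬝ᵥ w := by
    intro z w
    rw [dotProduct_comm, dotProduct_mulVec, ← mulVec_transpose, (hA.sub hB).eq]
  have hCq : ∀ z, C *ᵥ z ⬝ᵥ z = 0 := fun z => by
    rw [sub_mulVec, sub_dotProduct, h, sub_self]
  have hpolar : ∀ z w, 2 * (C *ᵥ z ⬝ᵥ w) = 0 := by
    intro z w
    have := hCq (z + w)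
    rw [mulVec_add, add_dotProduct, dotProduct_add, dotProduct_add, hCq, hCq, hCsymm z w] at this
    linear_combination this
  rw [← sub_eq_zero]
  ext i j
  simpa [C, mulVec_single, two_ne_zero] using hpolar (Pi.single j 1) (Pi.single i 1)

theorem mulVec_dotProduct_le_of_sublevel_subset {A B : Matrix m m ℝ} (hA : A.PosDef) {c : ℝ}
    (hc : 0 < c) (h : {z | A *ᵥ z ⬝ᵥ z ≤ c} ⊆ {z | B *ᵥ z ⬝ᵥ z ≤ c}) (z : m → ℝ) :
    B *ᵥ z ⬝ᵥ z ≤ A *ᵥ z ⬝ᵥ z := by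
  rcases eq_or_ne z 0 with rfl | hz
  · simp
  have hq : 0 < A *ᵥ z ⬝ᵥ z := by
    simpa [dotProduct_comm] using hA.dotProduct_mulVec_pos hz
  -- `t • z` lies on the boundary of the first sublevel set
  set t := √(c / (A *ᵥ z ⬝ᵥ z))
  have ht : t ^ 2 * (A *ᵥ z ⬝ᵥ z) = c := by
    rw [Real.sq_sqrt (div_pos hc hq).le, div_mul_cancel₀ _ hq.ne']
  have hB : B *ᵥ (t • z) ⬝ᵥ (t • z) ≤ c :=
    h (show A *ᵥ (t • z) ⬝ᵥ (t • z) ≤ c by rw [mulVec_smul_dotProduct_smul, ht])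
  rw [mulVec_smul_dotProduct_smul] at hB
  exact le_of_mul_le_mul_left (hB.trans ht.ge) (by positivity)

theorem PosDef.eq_of_sublevel_eq [DecidableEq m] {A B : Matrix m m ℝ} (hA : A.PosDef)
    (hB : B.PosDef) {c : ℝ} (hc : 0 < c)
    (h : {z | A *ᵥ z ⬝ᵥ z ≤ c} = {z | B *ᵥ z ⬝ᵥ z ≤ c}) : A = B :=
  IsSymm.ext_of_mulVec_dotProduct_self (isHermitian_iff_isSymm.mp hA.isHermitian)
    (isHermitian_iff_isSymm.mp hB.isHermitian) fun z =>
      le_antisymm (mulVec_dotProduct_le_of_sublevel_subset hB hc h.ge z)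
        (mulVec_dotProduct_le_of_sublevel_subset hA hc h.le z)

end Matrix

namespace SymplecticGroup

section CommRing

variable {l R : Type*} [DecidableEq l] [Fintype l] [CommRing R] {A : Matrix (l ⊕ l) (l ⊕ l) R}

theorem nonsing_inv_mem (hA : A ∈ symplecticGroup l R) : A⁻¹ ∈ symplecticGroup l R :=
  coe_inv' ⟨A, hA⟩ ▸ (⟨A, hA⟩⁻¹ : symplecticGroup l R).2

theorem mem_of_nonsing_inv_eq (hA : IsUnit A) (h : A⁻¹ = -Matrix.J l R * Aᵀ * Matrix.J l R) :
    A ∈ symplecticGroup l R := by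
  have h1 : -Matrix.J l R * Aᵀ * Matrix.J l R * A = 1 := by
    rw [← h, nonsing_inv_mul A ((isUnit_iff_isUnit_det A).mp hA)]
  rw [mem_iff']
  calc Aᵀ * Matrix.J l R * A = -(Matrix.J l R * Matrix.J l R) * (Aᵀ * Matrix.J l R * A) := by
        rw [J_squared, neg_neg, one_mul]
    _ = Matrix.J l R * (-Matrix.J l R * Aᵀ * Matrix.J l R * A) := by noncomm_ring
    _ = Matrix.J l R := by rw [h1, mul_one]

theorem fromBlocks_mem_iff_of_isSymm {A B C D : Matrix l l R} (hM : (fromBlocks A B C D).IsSymm)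
    (hD : IsUnit D) :
    fromBlocks A B C D ∈ symplecticGroup l R ↔ A * D - B * B = 1 ∧ C * D = D * B := by
  obtain ⟨hA, hBC, hCB, hD'⟩ := isSymm_fromBlocks_iff.mp hM
  rw [fromBlocks_mem_iff, hA.eq, hBC, hCB, hD'.eq]
  refine ⟨fun ⟨_, hCD, hAD⟩ => ⟨hAD, hCD⟩, fun ⟨hAD, hCD⟩ => ⟨?_, hCD, hAD⟩⟩
  have hAD' : A * D = 1 + B * B := by rw [← hAD]; abel
  refine hD.mul_left_inj.mp ?_
  calc A * C * D = A * D * B := by rw [mul_assoc, hCD, ← mul_assoc]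
    _ = B * (A * D) := by rw [hAD']; noncomm_ring
    _ = B * A * D := (mul_assoc _ _ _).symm

end CommRing

variable {l : Type*} [DecidableEq l] [Fintype l]

theorem J_mul_star_J : Matrix.J l ℝ * star (Matrix.J l ℝ) = 1 := by
  rw [star_eq_conjTranspose, conjTranspose_eq_transpose_of_trivial, J_transpose, mul_neg,
    J_squared, neg_neg]

theorem cfcSqrt_mem_of_posDef {P : Matrix (l ⊕ l) (l ⊕ l) ℝ} (hP : P.PosDef)
    (hPs : P ∈ symplecticGroup l ℝ) : CFC.sqrt P ∈ symplecticGroup l ℝ := by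
  have hQ : (CFC.sqrt P).PosDef := hP.isStrictlyPositive.sqrt.posDef
  have hstarJ : star (Matrix.J l ℝ) = -Matrix.J l ℝ := by
    rw [star_eq_conjTranspose, conjTranspose_eq_transpose_of_trivial, J_transpose]
  have hPinv : P⁻¹ = star (Matrix.J l ℝ) * P * Matrix.J l ℝ := by
    rw [inv_eq_symplectic_inv P hPs, hstarJ, (isHermitian_iff_isSymm.mp hP.isHermitian).eq]
  -- `(√P)⁻¹ = √(P⁻¹) = √(Jᵀ P J) = Jᵀ √P J`
  refine mem_of_nonsing_inv_eq hQ.isUnit ?_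
  rw [hP.posSemidef.inv_sqrt, hPinv, CFC.sqrt_star_mul_mul J_mul_star_J hP.posSemidef.nonneg,
    hstarJ, (isHermitian_iff_isSymm.mp hQ.isHermitian).eq]

theorem exists_sublevel_eq_image_ball_iff {M : Matrix (l ⊕ l) (l ⊕ l) ℝ} (hM : M.PosDef) {c : ℝ}
    (hc : 0 < c) :
    (∃ S ∈ symplecticGroup l ℝ, {z | M *ᵥ z ⬝ᵥ z ≤ c} = (S *ᵥ ·) '' {z | z ⬝ᵥ z ≤ c}) ↔
      M ∈ symplecticGroup l ℝ := by
  constructor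
  · rintro ⟨S, hS, hMS⟩
    have hSu : IsUnit S := (isUnit_iff_isUnit_det S).mpr (symplectic_det hS)
    have hT : S⁻¹ ∈ symplecticGroup l ℝ := nonsing_inv_mem hS
    have hN : (S⁻¹ᵀ * S⁻¹).PosDef := by
      simpa using PosDef.conjTranspose_mul_self S⁻¹
        (mulVec_injective_iff_isUnit.mpr (isUnit_nonsing_inv_iff.mpr hSu))
    rw [image_mulVec_setOf_dotProduct_self_le hSu] at hMS
    rw [hM.eq_of_sublevel_eq hN hc hMS]
    exact mul_mem (transpose_mem hT) hT
  · intro hMs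
    have hQ : (CFC.sqrt M).PosDef := hM.isStrictlyPositive.sqrt.posDef
    refine ⟨(CFC.sqrt M)⁻¹, nonsing_inv_mem (cfcSqrt_mem_of_posDef hM hMs), ?_⟩
    rw [image_mulVec_setOf_dotProduct_self_le (isUnit_nonsing_inv_iff.mpr hQ.isUnit),
      nonsing_inv_nonsing_inv _ ((isUnit_iff_isUnit_det _).mp hQ.isUnit),
      (isHermitian_iff_isSymm.mp hQ.isHermitian).eq, CFC.sqrt_mul_sqrt_self M hM.posSemidef.nonneg]

end SymplecticGroup

/-- for a symmetric positive definite block matrix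
`M = [[MXX, MXP],[MPX, MPP]]`, the ellipsoid `Ω = {z : Mz·z ≤ ℏ}` is a quantum blob
(`Ω = S(B²ⁿ(√ℏ))` for some `S ∈ Sp(n)`) if and only if
`MXX MPP − MXP MXP = I` and `MPX MPP = MPP MXP`. -/
theorem quantum_blob_iff_block_relations
    {n : ℕ} (ℏ : ℝ) (hℏ : 0 < ℏ)
    (MXX MXP MPX MPP : Matrix (Fin n) (Fin n) ℝ)
    (hM : (Matrix.fromBlocks MXX MXP MPX MPP).PosDef)
    (Ω : Set (Fin n ⊕ Fin n → ℝ))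
    (hΩ : Ω = {z | (Matrix.fromBlocks MXX MXP MPX MPP).mulVec z ⬝ᵥ z ≤ ℏ}) :
    (∃ S : Matrix (Fin n ⊕ Fin n) (Fin n ⊕ Fin n) ℝ,
        IsSymplectic S ∧ Ω = (fun z => S.mulVec z) '' ballh n ℏ)
      ↔ (MXX * MPP - MXP * MXP = 1 ∧ MPX * MPP = MPP * MXP) := by
  have hMPP : MPP.PosDef := hM.submatrix Sum.inr_injective
  rw [← SymplecticGroup.fromBlocks_mem_iff_of_isSymm (isHermitian_iff_isSymm.mp hM.isHermitian)
    hMPP.isUnit, ← SymplecticGroup.exists_sublevel_eq_image_ball_iff hM hℏ, hΩ]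
  simp only [isSymplectic_iff_mem_symplecticGroup, ballh]
end
end

section
/- Let Ω ⊆ ℝ^{2n} be a compact convex set, symmetric about the origin (Ω = −Ω), with 0 in its interior, and let ℓ ⊆ ℝ^{2n} be a linear subspace. For Y ⊆ ℝ^{2n} and a linear subspace m ⊆ ℝ^{2n}, write Y^{ℏ,ω,m} := {z' ∈ m : ω(z,z') ≤ ℏ for all z ∈ Y} for the symplectic ℏ-polar dual taken inside m, and let Π_m denote the orthogonal projection onto m. Then (Ω ∩ ℓ)^{ℏ,ω,Jℓ} = Π_{Jℓ}(Ω^{ℏ,ω}) and (Π_{Jℓ} Ω)^{ℏ,ω,ℓ} = Ω^{ℏ,ω} ∩ ℓ, where Jℓ denotes the image of ℓ under J (which is the orthogonal complement of ℓ when ℓ is Lagrangian). -/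
open Set RealInnerProductSpace

noncomputable section

/-- The standard symplectic matrix `J = [[0, I],[-I, 0]]` on `ℝ²ⁿ = ℝⁿ ⊕ ℝⁿ`. -/
def Jmat (n : ℕ) : Matrix (Fin n ⊕ Fin n) (Fin n ⊕ Fin n) ℝ :=
  Matrix.fromBlocks 0 1 (-1) 0

/-- `J` as a linear map on the Euclidean phase space `ℝ²ⁿ`. -/
def Jlin (n : ℕ) :
    EuclideanSpace ℝ (Fin n ⊕ Fin n) →ₗ[ℝ] EuclideanSpace ℝ (Fin n ⊕ Fin n) :=
  (WithLp.linearEquiv 2 ℝ ((Fin n ⊕ Fin n) → ℝ)).symm.toLinearMap ∘ₗ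
    Matrix.toLin' (Jmat n) ∘ₗ
      (WithLp.linearEquiv 2 ℝ ((Fin n ⊕ Fin n) → ℝ)).toLinearMap

/-- The standard symplectic form `ω(z,z') = (Jz)·z'`. -/
def symplFormE {n : ℕ} (z z' : EuclideanSpace ℝ (Fin n ⊕ Fin n)) : ℝ :=
  ⟪Jlin n z, z'⟫

/-- The symplectic ℏ-polar dual `Ω^{ℏ,ω} = {z' : ω(z,z') ≤ ℏ ∀ z ∈ Ω}`. -/
def symplDualE {n : ℕ} (ℏ : ℝ) (Ω : Set (EuclideanSpace ℝ (Fin n ⊕ Fin n))) :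
    Set (EuclideanSpace ℝ (Fin n ⊕ Fin n)) :=
  {z' | ∀ z ∈ Ω, symplFormE z z' ≤ ℏ}

/-- The symplectic ℏ-polar dual taken inside a subspace `m`:
`Y^{ℏ,ω,m} = {z' ∈ m : ω(z,z') ≤ ℏ ∀ z ∈ Y}`. -/
def symplDualIn {n : ℕ} (ℏ : ℝ) (m : Submodule ℝ (EuclideanSpace ℝ (Fin n ⊕ Fin n)))
    (Y : Set (EuclideanSpace ℝ (Fin n ⊕ Fin n))) :
    Set (EuclideanSpace ℝ (Fin n ⊕ Fin n)) :=
  {z' | z' ∈ m ∧ ∀ z ∈ Y, symplFormE z z' ≤ ℏ}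


/-! Since `ω(z, z') = ⟪Jz, z'⟫`, the symplectic `ℏ`-polar of a set is the Euclidean `ℏ`-polar of
its image under `J`. The first identity thereby becomes a fact about Euclidean polars: for a
convex absorbent `K` and a subspace `m`, the polar of `K ∩ m` taken inside `m` is the orthogonal
projection onto `m` of the polar of `K`. Indeed `⟪w, ·⟫` with `w ∈ m` is at most `ℏ` on `K ∩ m`,
hence at most `ℏ · gauge K` on `m`, and Hahn–Banach extends it to a functional `⟪u, ·⟫` with the
same bound on the whole space; then `u` lies in the polar of `K` and projects to `w`.
The second identity only uses that `J` is skew-adjoint: for `z' ∈ ℓ` we have `Jz' ∈ Jℓ`, so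
`ω(Π_{Jℓ} z, z') = -⟪Π_{Jℓ} z, Jz'⟫ = -⟪z, Jz'⟫ = ω(z, z')`. -/

open scoped Topology

theorem Jmat_eq_neg_J (n : ℕ) : Jmat n = -Matrix.J (Fin n) ℝ := by
  simp [Jmat, Matrix.J, Matrix.fromBlocks_neg]

theorem Jlin_eq_toEuclideanLin (n : ℕ) : Jlin n = Matrix.toEuclideanLin (Jmat n) := rfl

theorem inner_Jlin_left {n : ℕ} (x y : EuclideanSpace ℝ (Fin n ⊕ Fin n)) :
    ⟪Jlin n x, y⟫ = -⟪x, Jlin n y⟫ := by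
  have hJ : (Jmat n).conjTranspose = -Jmat n := by
    rw [Matrix.conjTranspose_eq_transpose_of_trivial, Jmat_eq_neg_J, Matrix.transpose_neg,
      Matrix.J_transpose]
  rw [← LinearMap.adjoint_inner_right, Jlin_eq_toEuclideanLin,
    ← Matrix.toEuclideanLin_conjTranspose_eq_adjoint, hJ, map_neg, LinearMap.neg_apply,
    inner_neg_right]

theorem Jlin_Jlin {n : ℕ} (z : EuclideanSpace ℝ (Fin n ⊕ Fin n)) : Jlin n (Jlin n z) = -z := by
  have hJ : Jmat n * Jmat n = -1 := by rw [Jmat_eq_neg_J, neg_mul_neg, Matrix.J_squared]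
  rw [Jlin_eq_toEuclideanLin, ← LinearMap.comp_apply, ← Matrix.toLpLin_mul_same, hJ, map_neg,
    Matrix.toLpLin_one, LinearMap.neg_apply, LinearMap.id_apply]

theorem Jlin_injective (n : ℕ) : Function.Injective (Jlin n) := fun x y h => by
  simpa [Jlin_Jlin] using congrArg (Jlin n) h

theorem Jlin_surjective (n : ℕ) : Function.Surjective (Jlin n) := fun z =>
  ⟨-Jlin n z, by rw [map_neg, Jlin_Jlin, neg_neg]⟩

theorem le_mul_gauge_of_forall_le {E : Type*} [AddCommGroup E] [Module ℝ E] {K : Set E}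
    (hK : Absorbent ℝ K) {ℏ : ℝ} (hℏ : 0 < ℏ) {m : Submodule ℝ E} (f : m →ₗ[ℝ] ℝ)
    (hf : ∀ y : m, (y : E) ∈ K → f y ≤ ℏ) (x : m) : f x ≤ ℏ * gauge K (x : E) := by
  refine le_of_forall_gt fun c hc => ?_
  obtain ⟨b, hb, hbc, y, hyK, hyx⟩ :=
    exists_lt_of_gauge_lt hK (show gauge K (x : E) < c / ℏ by rwa [lt_div_iff₀' hℏ])
  have hy : ((b⁻¹ • x : m) : E) = y := by
    rw [Submodule.coe_smul, ← hyx, smul_smul, inv_mul_cancel₀ hb.ne', one_smul]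
  calc f x = b * f (b⁻¹ • x) := by
        rw [map_smul, smul_eq_mul, ← mul_assoc, mul_inv_cancel₀ hb.ne', one_mul]
    _ ≤ b * ℏ := mul_le_mul_of_nonneg_left (hf _ (hy ▸ hyK)) hb.le
    _ < c := (lt_div_iff₀ hℏ).mp hbc

section InnerPolar

variable {E : Type*} [NormedAddCommGroup E] [InnerProductSpace ℝ E]

def innerPolar (ℏ : ℝ) (K : Set E) : Set E := {w | ∀ z ∈ K, ⟪z, w⟫ ≤ ℏ}

theorem exists_mem_innerPolar_sub_mem_orthogonal [FiniteDimensional ℝ E] {K : Set E}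
    (hKc : Convex ℝ K) (hKa : Absorbent ℝ K) {ℏ : ℝ} (hℏ : 0 < ℏ) {m : Submodule ℝ E} {w : E}
    (hw : w ∈ innerPolar ℏ (K ∩ m)) : ∃ u ∈ innerPolar ℏ K, u - w ∈ mᗮ := by
  let φ : m →ₗ[ℝ] ℝ := innerₛₗ ℝ w ∘ₗ m.subtype
  have hφ : ∀ y : m, (y : E) ∈ K → φ y ≤ ℏ := fun y hy => by
    simpa [φ, real_inner_comm] using hw y ⟨hy, y.2⟩
  obtain ⟨g, hgφ, hg⟩ := exists_extension_of_le_sublinear ⟨m, φ⟩ (fun z => ℏ * gauge K z)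
    (fun c hc z => by simp only [gauge_smul_of_nonneg hc.le, smul_eq_mul]; ring)
    (fun x y => by
      simpa only [mul_add] using mul_le_mul_of_nonneg_left (gauge_add_le hKc hKa x y) hℏ.le)
    (le_mul_gauge_of_forall_le hKa hℏ φ hφ)
  set u := (InnerProductSpace.toDual ℝ E).symm (LinearMap.toContinuousLinearMap g)
  have hu : ∀ z, ⟪z, u⟫ = g z := fun z => by
    rw [real_inner_comm]; simp [u, InnerProductSpace.toDual_symm_apply]
  refine ⟨u, fun z hz => ?_, fun z hz => ?_⟩
  · calc ⟪z, u⟫ = g z := hu z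
      _ ≤ ℏ * gauge K z := hg z
      _ ≤ ℏ := mul_le_of_le_one_right hℏ.le (gauge_le_one_of_mem hz)
  · have hgz : g z = ⟪w, z⟫ := hgφ ⟨z, hz⟩
    rw [inner_sub_right, hu, hgz, real_inner_comm, sub_self]

theorem inter_innerPolar_inter_eq_image_starProjection [FiniteDimensional ℝ E] {K : Set E}
    (hKc : Convex ℝ K) (hKa : Absorbent ℝ K) {ℏ : ℝ} (hℏ : 0 < ℏ) (m : Submodule ℝ E) :
    (m : Set E) ∩ innerPolar ℏ (K ∩ m) = m.starProjection '' innerPolar ℏ K := by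
  apply Subset.antisymm
  · rintro w ⟨hwm, hw⟩
    obtain ⟨u, hu, huw⟩ := exists_mem_innerPolar_sub_mem_orthogonal hKc hKa hℏ hw
    exact ⟨u, hu, Submodule.eq_starProjection_of_mem_orthogonal hwm huw⟩
  · rintro _ ⟨u, hu, rfl⟩
    refine ⟨m.starProjection_apply_mem u, fun z hz => ?_⟩
    rw [← Submodule.inner_starProjection_left_eq_right,
      Submodule.starProjection_eq_self_iff.mpr hz.2]
    exact hu z hz.1

end InnerPolar

section Symplectic

variable {n : ℕ}

theorem symplDualE_eq_innerPolar_image (ℏ : ℝ) (Ω : Set (EuclideanSpace ℝ (Fin n ⊕ Fin n))) :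
    symplDualE ℏ Ω = innerPolar ℏ (Jlin n '' Ω) := by
  ext w
  simp only [symplDualE, innerPolar, symplFormE, mem_ofPred_eq, forall_mem_image]

theorem symplDualIn_eq_inter_innerPolar_image (ℏ : ℝ)
    (m : Submodule ℝ (EuclideanSpace ℝ (Fin n ⊕ Fin n)))
    (Y : Set (EuclideanSpace ℝ (Fin n ⊕ Fin n))) :
    symplDualIn ℏ m Y = (m : Set _) ∩ innerPolar ℏ (Jlin n '' Y) := by
  ext w
  simp only [symplDualIn, innerPolar, symplFormE, mem_ofPred_eq, mem_inter_iff, SetLike.mem_coe,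
    forall_mem_image]

theorem symplFormE_starProjection_map_Jlin_left {ℓ : Submodule ℝ (EuclideanSpace ℝ (Fin n ⊕ Fin n))}
    {z' : EuclideanSpace ℝ (Fin n ⊕ Fin n)} (hz' : z' ∈ ℓ) (z : EuclideanSpace ℝ (Fin n ⊕ Fin n)) :
    symplFormE ((ℓ.map (Jlin n)).starProjection z) z' = symplFormE z z' := by
  have hJz' : Jlin n z' ∈ ℓ.map (Jlin n) := Submodule.mem_map_of_mem hz'
  rw [symplFormE, symplFormE, inner_Jlin_left, inner_Jlin_left,
    Submodule.inner_starProjection_left_eq_right, Submodule.starProjection_eq_self_iff.mpr hJz']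

theorem symplDualIn_map_Jlin_inter_eq_image_starProjection {ℏ : ℝ} (hℏ : 0 < ℏ)
    {Ω : Set (EuclideanSpace ℝ (Fin n ⊕ Fin n))} (hΩconv : Convex ℝ Ω) (hΩ0 : Ω ∈ 𝓝 0)
    (ℓ : Submodule ℝ (EuclideanSpace ℝ (Fin n ⊕ Fin n))) :
    symplDualIn ℏ (ℓ.map (Jlin n)) (Ω ∩ ℓ)
      = (ℓ.map (Jlin n)).starProjection '' symplDualE ℏ Ω := by
  have hJΩ : Jlin n '' Ω ∈ 𝓝 0 := by
    simpa using ((Jlin n).isOpenMap_of_finiteDimensional (Jlin_surjective n)).image_mem_nhds hΩ0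
  rw [symplDualIn_eq_inter_innerPolar_image, image_inter (Jlin_injective n), ← Submodule.map_coe,
    inter_innerPolar_inter_eq_image_starProjection (hΩconv.linear_image _)
      (absorbent_nhds_zero hJΩ) hℏ, symplDualE_eq_innerPolar_image]

theorem symplDualIn_image_starProjection_map_Jlin (ℏ : ℝ)
    (Ω : Set (EuclideanSpace ℝ (Fin n ⊕ Fin n)))
    (ℓ : Submodule ℝ (EuclideanSpace ℝ (Fin n ⊕ Fin n))) :
    symplDualIn ℏ ℓ ((ℓ.map (Jlin n)).starProjection '' Ω) = symplDualE ℏ Ω ∩ ℓ := by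
  ext z'
  simp only [symplDualIn, symplDualE, mem_ofPred_eq, mem_inter_iff, SetLike.mem_coe,
    forall_mem_image, and_comm (a := z' ∈ ℓ)]
  exact and_congr_left fun hz' => forall₂_congr fun z _ => by
    rw [symplFormE_starProjection_map_Jlin_left hz']

end Symplectic

theorem symplectic_polar_duality_exchanges_sections_and_projections_general
    {n : ℕ} (ℏ : ℝ) (hℏ : 0 < ℏ)
    (Ω : Set (EuclideanSpace ℝ (Fin n ⊕ Fin n)))
    (hΩconv : Convex ℝ Ω)
    (hΩ0 : (0 : EuclideanSpace ℝ (Fin n ⊕ Fin n)) ∈ interior Ω)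
    (ℓ : Submodule ℝ (EuclideanSpace ℝ (Fin n ⊕ Fin n))) :
    symplDualIn ℏ (ℓ.map (Jlin n)) (Ω ∩ ℓ)
        = (fun z => (Submodule.orthogonalProjectionOnto (ℓ.map (Jlin n)) z :
            EuclideanSpace ℝ (Fin n ⊕ Fin n))) '' symplDualE ℏ Ω
    ∧ symplDualIn ℏ ℓ
          ((fun z => (Submodule.orthogonalProjectionOnto (ℓ.map (Jlin n)) z :
            EuclideanSpace ℝ (Fin n ⊕ Fin n))) '' Ω)
        = symplDualE ℏ Ω ∩ ℓ := by
  simp only [Submodule.coe_orthogonalProjectionOnto_apply]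
  exact ⟨symplDualIn_map_Jlin_inter_eq_image_starProjection hℏ hΩconv
      (mem_interior_iff_mem_nhds.mp hΩ0) ℓ,
    symplDualIn_image_starProjection_map_Jlin ℏ Ω ℓ⟩

/-- for a compact, convex, centrally symmetric body `Ω ⊆ ℝ²ⁿ` with `0`
in its interior and a linear subspace `ℓ ⊆ ℝ²ⁿ`, one has
`(Ω ∩ ℓ)^{ℏ,ω,Jℓ} = Π_{Jℓ}(Ω^{ℏ,ω})` and `(Π_{Jℓ} Ω)^{ℏ,ω,ℓ} = Ω^{ℏ,ω} ∩ ℓ`,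
where `Jℓ` is the image of `ℓ` under `J` and `Π_m` is the orthogonal projection
onto `m`. -/
theorem symplectic_polar_duality_exchanges_sections_and_projections
    {n : ℕ} (ℏ : ℝ) (hℏ : 0 < ℏ)
    (Ω : Set (EuclideanSpace ℝ (Fin n ⊕ Fin n)))
    (hΩc : IsCompact Ω) (hΩconv : Convex ℝ Ω) (hΩsymm : Ω = -Ω)
    (hΩ0 : (0 : EuclideanSpace ℝ (Fin n ⊕ Fin n)) ∈ interior Ω)
    (ℓ : Submodule ℝ (EuclideanSpace ℝ (Fin n ⊕ Fin n))) :
    symplDualIn ℏ (ℓ.map (Jlin n)) (Ω ∩ ℓ)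
        = (fun z => (Submodule.orthogonalProjectionOnto (ℓ.map (Jlin n)) z :
            EuclideanSpace ℝ (Fin n ⊕ Fin n))) '' symplDualE ℏ Ω
    ∧ symplDualIn ℏ ℓ
          ((fun z => (Submodule.orthogonalProjectionOnto (ℓ.map (Jlin n)) z :
            EuclideanSpace ℝ (Fin n ⊕ Fin n))) '' Ω)
        = symplDualE ℏ Ω ∩ ℓ :=
  symplectic_polar_duality_exchanges_sections_and_projections_general ℏ hℏ Ω hΩconv hΩ0 ℓ
end
end

section
/- Let X be a real symmetric positive definite n×n matrix, Y a real symmetric n×n matrix, and define the generalized Gaussian ψ_{X,Y}(x) := (πℏ)^{−n/4} (det X)^{1/4} exp(−(1/2ℏ)(X+iY)x·x) for x ∈ ℝⁿ. Then for every (x,p) ∈ ℝ^{2n}, the Wigner transform Wψ_{X,Y}(x,p) := (2πℏ)^{−n} ∫_{ℝⁿ} e^{−(i/ℏ) p·y} ψ_{X,Y}(x + y/2) conj(ψ_{X,Y}(x − y/2)) dy equals (πℏ)^{−n} exp(−(1/ℏ) G z·z), where z = (x,p) and G is the 2n×2n block matrix [[X + Y X⁻¹ Y, Y X⁻¹],[X⁻¹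 Y, X⁻¹]]. -/
/-!
Written out, the Wigner integrand at `(x, p)` is `exp (-Xx·x/ℏ)` times the Gaussian
`y ↦ exp (-Xy·y/(4ℏ) - i (Yx + p)·y/ℏ)`: the real parts of the two exponents combine by the
parallelogram law, and their imaginary parts cancel up to the cross term `Yx·y` by polarization.
Completing the square after the change of variables `u = X^{1/2} y` gives
`(4πℏ)^{n/2} (det X)^{-1/2} exp (-X⁻¹(Yx + p)·(Yx + p)/ℏ)` for the integral, and for symmetric `Y`
the block matrix satisfies `Gz·z = Xx·x + X⁻¹(Yx + p)·(Yx + p)`.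
-/

open Matrix Set MeasureTheory Real Complex ComplexConjugate

noncomputable section

section QuadraticForms

variable {R ι : Type*} [Fintype ι]

theorem Matrix.IsSymm.mulVec_dotProduct [CommSemiring R] {M : Matrix ι ι R} (hM : M.IsSymm)
    (u v : ι → R) : M *ᵥ u ⬝ᵥ v = u ⬝ᵥ M *ᵥ v := by
  rw [dotProduct_mulVec, ← mulVec_transpose, hM.eq]

theorem Matrix.mulVec_add_dotProduct_add_add_mulVec_sub_dotProduct_sub [CommRing R]
    (M : Matrix ι ι R) (u v : ι → R) :
    M *ᵥ (u + v) ⬝ᵥ (u + v) + M *ᵥ (u - v) ⬝ᵥ (u - v) = 2 * (M *ᵥ u ⬝ᵥ u) + 2 * (M *ᵥ v ⬝ᵥ v) := by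
  simp only [mulVec_add, mulVec_sub, add_dotProduct, sub_dotProduct, dotProduct_add, dotProduct_sub]
  ring

theorem Matrix.IsSymm.mulVec_add_dotProduct_add_sub_mulVec_sub_dotProduct_sub [CommRing R]
    {M : Matrix ι ι R} (hM : M.IsSymm) (u v : ι → R) :
    M *ᵥ (u + v) ⬝ᵥ (u + v) - M *ᵥ (u - v) ⬝ᵥ (u - v) = 4 * (M *ᵥ u ⬝ᵥ v) := by
  have := hM.mulVec_dotProduct v u
  rw [dotProduct_comm v] at this
  simp only [mulVec_add, mulVec_sub, add_dotProduct, sub_dotProduct, dotProduct_add, dotProduct_sub]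
  linear_combination 2 * this

theorem Matrix.fromBlocks_mulVec_sumElim_dotProduct_sumElim [CommRing R] (X A : Matrix ι ι R)
    {Y : Matrix ι ι R} (hY : Y.IsSymm) (x p : ι → R) :
    fromBlocks (X + Y * A * Y) (Y * A) (A * Y) A *ᵥ Sum.elim x p ⬝ᵥ Sum.elim x p
      = X *ᵥ x ⬝ᵥ x + A *ᵥ (Y *ᵥ x + p) ⬝ᵥ (Y *ᵥ x + p) := by
  rw [fromBlocks_mulVec, sumElim_dotProduct_sumElim]
  simp only [add_mulVec, ← mulVec_mulVec, add_dotProduct, dotProduct_add, mulVec_add,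
    Sum.elim_comp_inl, Sum.elim_comp_inr, hY.mulVec_dotProduct _ x]
  ring

end QuadraticForms

section GaussianIntegral

variable {ι : Type*} [Fintype ι] [DecidableEq ι]

theorem integral_comp_mulVec {E : Type*} [NormedAddCommGroup E] [NormedSpace ℝ E]
    {M : Matrix ι ι ℝ} (hM : M.det ≠ 0) (f : (ι → ℝ) → E) :
    ∫ y, f (M *ᵥ y) = |M.det|⁻¹ • ∫ y, f y := by
  have hemb : MeasurableEmbedding (toLin' M) :=
    (LinearMap.isClosedEmbedding_of_injective
      (LinearMap.ker_eq_bot.mpr (mulVec_injective_of_det_ne_zero hM))).measurableEmbedding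
  change ∫ y, f (toLin' M y) = _
  rw [← hemb.integral_map, Real.map_matrix_volume_pi_eq_smul_volume_pi hM, integral_smul_measure,
    ENNReal.toReal_ofReal (by positivity), abs_inv]

open scoped MatrixOrder in
theorem integral_cexp_neg_mul_mulVec_dotProduct_add {X : Matrix ι ι ℝ} (hX : X.PosDef) {b : ℂ}
    (hb : 0 < b.re) (t : ℂ) (c : ι → ℝ) :
    ∫ y : ι → ℝ, cexp (-b * (X *ᵥ y ⬝ᵥ y : ℝ) + t * (c ⬝ᵥ y : ℝ))
      = (√X.det)⁻¹ * (π / b) ^ (Fintype.card ι / 2 : ℂ) *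
        cexp (t ^ 2 * (X⁻¹ *ᵥ c ⬝ᵥ c : ℝ) / (4 * b)) := by
  set S := CFC.sqrt X
  have hSS : S * S = X := CFC.sqrt_mul_sqrt_self X hX.posSemidef.nonneg
  have hS : S.IsSymm := isHermitian_iff_isSymm.mp (CFC.sqrt_nonneg X).posSemidef.isHermitian
  have hdetS : S.det = √X.det := by simpa using hX.posSemidef.det_sqrt
  have hdetS0 : S.det ≠ 0 := by rw [hdetS]; exact (Real.sqrt_pos.mpr hX.det_pos).ne'
  set c' := S⁻¹ *ᵥ c
  have hquad (y : ι → ℝ) : X *ᵥ y ⬝ᵥ y = ∑ i, (S *ᵥ y) i ^ 2 := by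
    rw [← hSS, ← mulVec_mulVec, hS.mulVec_dotProduct, dotProduct, Finset.sum_congr rfl]
    intro i _; ring
  have hlin (y : ι → ℝ) : c ⬝ᵥ y = c' ⬝ᵥ S *ᵥ y := by
    rw [← hS.mulVec_dotProduct, mulVec_mulVec, mul_nonsing_inv _ hdetS0.isUnit, one_mulVec]
  have hc' : c' ⬝ᵥ c' = X⁻¹ *ᵥ c ⬝ᵥ c := by
    rw [hS.inv.mulVec_dotProduct, mulVec_mulVec, ← Matrix.mul_inv_rev, hSS, dotProduct_comm]
  set g : (ι → ℝ) → ℂ := fun u => cexp (-b * ∑ i, (u i : ℂ) ^ 2 + ∑ i, (t * c' i) * u i)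
  calc ∫ y : ι → ℝ, cexp (-b * (X *ᵥ y ⬝ᵥ y : ℝ) + t * (c ⬝ᵥ y : ℝ))
      = ∫ y, g (S *ᵥ y) := by
        congr! 2 with y
        rw [hquad, hlin]
        push_cast [g, dotProduct, Finset.mul_sum]
        simp only [mul_assoc]
    _ = |S.det|⁻¹ • ∫ u, g u := integral_comp_mulVec hdetS0 g
    _ = _ := by
      rw [GaussianFourier.integral_cexp_neg_mul_sum_add hb, hdetS,
        abs_of_nonneg (Real.sqrt_nonneg _)]
      have hsum : ∑ i, (t * c' i) ^ 2 = t ^ 2 * (X⁻¹ *ᵥ c ⬝ᵥ c : ℝ) := by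
        rw [← hc']
        push_cast [dotProduct, Finset.mul_sum]
        exact Finset.sum_congr rfl fun i _ => by ring
      rw [hsum, Complex.real_smul, mul_assoc]

end GaussianIntegral

section WignerIntegrand

variable {ι : Type*} [Fintype ι]

def gaussianExponent (ℏ : ℝ) (X Y : Matrix ι ι ℝ) (u : ι → ℝ) : ℂ :=
  -(1 / (2 * ℏ)) * ((X *ᵥ u ⬝ᵥ u : ℝ) + I * (Y *ᵥ u ⬝ᵥ u : ℝ))

theorem neg_I_div_mul_add_gaussianExponent_add_conj_gaussianExponent (ℏ : ℝ) (X : Matrix ι ι ℝ)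
    {Y : Matrix ι ι ℝ} (hY : Y.IsSymm) (x p y : ι → ℝ) :
    -(I / ℏ) * (p ⬝ᵥ y : ℝ) + gaussianExponent ℏ X Y (x + (2⁻¹ : ℝ) • y)
        + conj (gaussianExponent ℏ X Y (x - (2⁻¹ : ℝ) • y))
      = -(1 / ℏ) * (X *ᵥ x ⬝ᵥ x : ℝ) + (-(1 / (4 * ℏ)) * (X *ᵥ y ⬝ᵥ y : ℝ)
        + -(I / ℏ) * ((Y *ᵥ x + p) ⬝ᵥ y : ℝ)) := by
  have hX := X.mulVec_add_dotProduct_add_add_mulVec_sub_dotProduct_sub x ((2⁻¹ : ℝ) • y)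
  have hY := hY.mulVec_add_dotProduct_add_sub_mulVec_sub_dotProduct_sub x ((2⁻¹ : ℝ) • y)
  simp only [mulVec_smul, smul_dotProduct, dotProduct_smul, smul_eq_mul] at hX hY
  have hXc := congrArg ((↑) : ℝ → ℂ) hX
  have hYc := congrArg ((↑) : ℝ → ℂ) hY
  push_cast at hXc hYc
  simp only [gaussianExponent, map_mul, map_add, map_neg, map_div₀, map_one, map_ofNat,
    conj_ofReal, conj_I, add_dotProduct, ofReal_add]
  linear_combination (-(1 / (2 * ℏ : ℂ))) * hXc + (-(I / (2 * ℏ))) * hYc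

theorem cexp_mul_gaussian_mul_conj_gaussian (ℏ c : ℝ)
    (X : Matrix ι ι ℝ) {Y : Matrix ι ι ℝ} (hY : Y.IsSymm) (x p y : ι → ℝ) :
    cexp (-(I / ℏ) * (p ⬝ᵥ y : ℝ)) * (c * cexp (gaussianExponent ℏ X Y (x + (2⁻¹ : ℝ) • y)))
        * conj (c * cexp (gaussianExponent ℏ X Y (x - (2⁻¹ : ℝ) • y)))
      = c ^ 2 * cexp (-(1 / ℏ) * (X *ᵥ x ⬝ᵥ x : ℝ)) * cexp (-(1 / (4 * ℏ)) * (X *ᵥ y ⬝ᵥ y : ℝ)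
        + -(I / ℏ) * ((Y *ᵥ x + p) ⬝ᵥ y : ℝ)) := by
  rw [mul_assoc ((c : ℂ) ^ 2), ← Complex.exp_add,
    ← neg_I_div_mul_add_gaussianExponent_add_conj_gaussianExponent ℏ X hY x p y]
  simp only [map_mul, conj_ofReal, ← exp_conj, Complex.exp_add]
  ring

end WignerIntegrand

theorem wigner_gaussian_normalization {ℏ d : ℝ} (hℏ : 0 < ℏ) (hd : 0 < d) (s : ℝ) :
    (2 * π * ℏ) ^ (-s) * ((π * ℏ) ^ (-s / 4) * d ^ (1 / 4 : ℝ)) ^ 2 * (√d)⁻¹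
      * (4 * π * ℏ) ^ (s / 2) = (π * ℏ) ^ (-s) := by
  have ha : 0 < π * ℏ := by positivity
  have h4 : (4 : ℝ) ^ (s / 2) = 2 ^ s := by
    rw [show (4 : ℝ) = 2 ^ (2 : ℝ) by norm_num, ← rpow_mul zero_le_two]
    ring_nf
  have hsq : ((π * ℏ) ^ (-s / 4) * d ^ (1 / 4 : ℝ)) ^ 2 = ((π * ℏ) ^ (s / 2))⁻¹ * √d := by
    rw [mul_pow, ← rpow_mul_natCast ha.le, ← rpow_mul_natCast hd.le, sqrt_eq_rpow, ← rpow_neg ha.le]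
    ring_nf
  rw [mul_assoc 2, mul_assoc 4, mul_rpow zero_le_two ha.le, mul_rpow zero_le_four ha.le, h4, hsq,
    rpow_neg zero_le_two, rpow_neg ha.le]
  have : 0 < √d := sqrt_pos.mpr hd
  field_simp

/-- the Wigner transform of the generalized Gaussian
`ψ_{X,Y}(x) = (πℏ)^{-n/4} (det X)^{1/4} exp(-(1/2ℏ)(X+iY)x·x)` is
`Wψ_{X,Y}(z) = (πℏ)^{-n} exp(-(1/ℏ) Gz·z)` with
`G = [[X + YX⁻¹Y, YX⁻¹],[X⁻¹Y, X⁻¹]]`. -/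
theorem wigner_transform_of_generalized_gaussian
    {n : ℕ} (ℏ : ℝ) (hℏ : 0 < ℏ)
    (X Y : Matrix (Fin n) (Fin n) ℝ) (hX : X.PosDef) (hY : Y.IsSymm)
    (ψ : (Fin n → ℝ) → ℂ)
    (hψ : ψ = fun x => (((π * ℏ) ^ (-(n : ℝ) / 4) * X.det ^ ((1 : ℝ) / 4) : ℝ) : ℂ) *
      Complex.exp (-(1 / (2 * ℏ)) *
        (((X.mulVec x ⬝ᵥ x : ℝ) : ℂ) + Complex.I * ((Y.mulVec x ⬝ᵥ x : ℝ) : ℂ))))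
    (W : (Fin n → ℝ) → (Fin n → ℝ) → ℂ)
    (hW : W = fun x p => (((2 * π * ℏ) ^ (-(n : ℝ)) : ℝ) : ℂ) *
      ∫ y : Fin n → ℝ, Complex.exp (-(Complex.I / (ℏ : ℂ)) * ((p ⬝ᵥ y : ℝ) : ℂ)) *
        ψ (x + (2⁻¹ : ℝ) • y) * (starRingEnd ℂ) (ψ (x - (2⁻¹ : ℝ) • y)))
    (G : Matrix (Fin n ⊕ Fin n) (Fin n ⊕ Fin n) ℝ)
    (hG : G = Matrix.fromBlocks (X + Y * X⁻¹ * Y) (Y * X⁻¹) (X⁻¹ * Y) X⁻¹) :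
    ∀ x p : Fin n → ℝ,
      W x p = (((π * ℏ) ^ (-(n : ℝ)) *
        Real.exp (-(1 / ℏ) * (G.mulVec (Sum.elim x p) ⬝ᵥ Sum.elim x p)) : ℝ) : ℂ) := by
  intro x p
  obtain rfl : ψ = fun u => (((π * ℏ) ^ (-(n : ℝ) / 4) * X.det ^ ((1 : ℝ) / 4) : ℝ) : ℂ)
      * cexp (gaussianExponent ℏ X Y u) := hψ
  subst hW hG
  have hb : 0 < (1 / (4 * ℏ : ℂ)).re := by simp; positivity
  have hpow : (π / (1 / (4 * ℏ : ℂ))) ^ ((Fintype.card (Fin n) : ℂ) / 2)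
      = ((4 * π * ℏ) ^ ((n : ℝ) / 2) : ℝ) := by
    rw [show (π / (1 / (4 * ℏ : ℂ))) = ((4 * π * ℏ : ℝ) : ℂ) by push_cast; field_simp,
      ofReal_cpow (by positivity), Fintype.card_fin]
    push_cast
    rfl
  have hexp (q₁ q₂ : ℝ) : cexp (-(1 / ℏ) * q₁) * cexp ((-(I / ℏ)) ^ 2 * q₂ / (4 * (1 / (4 * ℏ))))
      = (rexp (-(1 / ℏ) * (q₁ + q₂)) : ℂ) := by
    rw [← Complex.exp_add, ofReal_exp]
    congr 1
    have hℏ' : (ℏ : ℂ) ≠ 0 := ofReal_ne_zero.mpr hℏ.ne'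
    push_cast
    field_simp
    linear_combination (q₂ : ℂ) * I_sq
  simp only [cexp_mul_gaussian_mul_conj_gaussian ℏ _ X hY x p, integral_const_mul,
    integral_cexp_neg_mul_mulVec_dotProduct_add hX hb, hpow,
    fromBlocks_mulVec_sumElim_dotProduct_sumElim X X⁻¹ hY,
    ← wigner_gaussian_normalization hℏ hX.det_pos n]
  rw [ofReal_mul _ (rexp _), ← hexp]
  push_cast
  ring
end
end
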